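/- arXiv:2012.07341 — 7 statements merged into one kernel-verified Lean document; each statement's English description precedes it below -/
import Mathlib

section
/- Let c1, c2 be positive constants with ln(c1·c2) ≥ 1. Then any z > 0 satisfying z ≤ c1·ln(c2·z) also satisfies z ≤ 2·c1·ln(c1·c2). -/
theorem stmt_1 (c1 c2 : ℝ) (h1 : 0 < c1) (h2 : 0 < c2)
    (hlog : 1 ≤ Real.log (c1 * c2)) (z : ℝ) (hz : 0 < z)
    (hineq : z ≤ c1 * Real.log (c2 * z)) :
    z ≤ 2 * c1 * Real.log (c1 * c2) := by
  have hx : (0:ℝ) < z / (2 * c1) := by positivity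
  have hsub : Real.log (z / (2 * c1)) ≤ z / (2 * c1) - 1 :=
    Real.log_le_sub_one_of_pos hx
  have hlogz : Real.log z ≤ z / (2 * c1) + Real.log (2 * c1) - 1 := by
    rw [Real.log_div (ne_of_gt hz) (by positivity)] at hsub
    linarith
  have hsplit : Real.log (c2 * z) = Real.log c2 + Real.log z :=
    Real.log_mul (ne_of_gt h2) (ne_of_gt hz)
  have h2c1 : Real.log (2 * c1) = Real.log 2 + Real.log c1 :=
    Real.log_mul two_ne_zero (ne_of_gt h1)
  have hc1c2 : Real.log (c1 * c2) = Real.log c1 + Real.log c2 :=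
    Real.log_mul (ne_of_gt h1) (ne_of_gt h2)
  have hlog2 : Real.log 2 ≤ 1 := by
    have := Real.log_le_sub_one_of_pos (by norm_num : (0:ℝ) < 2)
    linarith
  have key : z ≤ c1 * Real.log c2 + c1 * (z / (2 * c1) + Real.log (2 * c1) - 1) := by
    calc z ≤ c1 * Real.log (c2 * z) := hineq
    _ = c1 * Real.log c2 + c1 * Real.log z := by rw [hsplit]; ring
    _ ≤ _ := by nlinarith
  have : c1 * (z / (2 * c1)) = z / 2 := by field_simp
  nlinarith
end

section
/- Let m ≥ 2 be real, c1 = 2, c2 ≥ 4, c3 ∈ (0,1), and c4 = 8H with H ≥ 2. Define g1(m) = -c3·m + c1·√m·ln(c2·m) + c4·ln(m). Then g1(m) ≤ (132·c1·c4 / c3) · [ln(10·√(c2·c4) / c3)]². -/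
private lemma quad_aux (c b t : ℝ) (hc : 0 < c) : b * t - c * t ^ 2 / 2 ≤ b ^ 2 / (2 * c) := by
  rw [le_div_iff₀ (by positivity)]
  nlinarith [sq_nonneg (c * t - b)]

private lemma sq_le_aux (b L : ℝ) (h0 : 0 ≤ b) (h : b ≤ 4 * L) : b ^ 2 ≤ 16 * L ^ 2 := by
  nlinarith

private lemma div_cmp_aux (c2 c3 c4 : ℝ) (h3 : 0 < c3) (h31 : c3 < 1) (h2 : 4 ≤ c2)
    (h4 : 0 < c4) : 4 * c4 * c3 ^ 2 ≤ 100 * (c2 * c4) * c3 := by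
  nlinarith [mul_pos h4 h3, mul_pos (mul_pos h4 h3) h3]

private lemma lmul_aux (c3 c4 L : ℝ) (h3 : 0 < c3) (h31 : c3 < 1) (hL : 1 ≤ L)
    (h4 : 0 < c4) : 2 * c4 * L * c3 ≤ 2 * c4 * L ^ 2 := by
  nlinarith [mul_pos h4 (lt_of_lt_of_le one_pos hL)]

private lemma exp_aux (sq c3 : ℝ) (h8 : 8 ≤ sq) (h3 : 0 < c3) (h31 : c3 < 1) :
    Real.exp 1 * c3 ≤ 10 * sq := by
  nlinarith [Real.exp_one_lt_d9]

private lemma fin_aux (c4 L : ℝ) (h4 : 16 ≤ c4) : 8 * L ^ 2 + 2 * c4 * L ^ 2 ≤ 264 * c4 * L ^ 2 := by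
  nlinarith [sq_nonneg L]

set_option maxHeartbeats 2000000 in
theorem stmt_2 (m c1 c2 c3 c4 H : ℝ) (hm : 2 ≤ m) (hc1 : c1 = 2) (hc2 : 4 ≤ c2)
    (hc3 : c3 ∈ Set.Ioo (0 : ℝ) 1) (hc4 : c4 = 8 * H) (hH : 2 ≤ H) :
    -c3 * m + c1 * Real.sqrt m * Real.log (c2 * m) + c4 * Real.log m ≤
      132 * c1 * c4 / c3 * (Real.log (10 * Real.sqrt (c2 * c4) / c3)) ^ 2 := by
  obtain ⟨hc3p, hc31⟩ := hc3
  have hc4' : (16:ℝ) ≤ c4 := by linarith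
  have hc4p : (0:ℝ) < c4 := by linarith
  have hm0 : (0:ℝ) < m := by linarith
  set t := Real.sqrt m with ht_def
  clear_value t
  have ht2 : t ^ 2 = m := by rw [ht_def]; exact Real.sq_sqrt hm0.le
  have ht1 : (1:ℝ) ≤ t := by
    rw [ht_def, show (1:ℝ) = Real.sqrt 1 from (Real.sqrt_one).symm]
    exact Real.sqrt_le_sqrt (by linarith)
  have ht0 : (0:ℝ) < t := by linarith
  set L := Real.log (10 * Real.sqrt (c2 * c4) / c3) with hL_def
  clear_value L
  -- basic log facts
  have hlogc3 : Real.log c3 < 0 := Real.log_neg hc3p hc31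
  have hlogc2 : Real.log 4 ≤ Real.log c2 := Real.log_le_log (by norm_num) hc2
  have hlog4 : (0:ℝ) < Real.log 4 := Real.log_pos (by norm_num)
  have hlog16 : (0:ℝ) < Real.log 16 := Real.log_pos (by norm_num)
  -- rewrite m as t^2 in the goal
  rw [← ht2] at hm ⊢
  -- key A
  have heqA : Real.log t = Real.log (c3 * t / 16) + Real.log (16 / c3) := by
    rw [← Real.log_mul (by positivity) (by positivity)]
    congr 1
    field_simp
  have hA0 : Real.log (c3 * t / 16) ≤ c3 * t / 16 - 1 :=
    Real.log_le_sub_one_of_pos (by positivity)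
  have keyA : 4 * t * Real.log t ≤ c3 * t ^ 2 / 4 + 4 * t * Real.log (16 / c3) := by
    have h := mul_le_mul_of_nonneg_left hA0 (by linarith : (0:ℝ) ≤ 4 * t)
    have e : 4 * t * (c3 * t / 16 - 1) = c3 * t ^ 2 / 4 - 4 * t := by ring
    have e2 : 4 * t * Real.log t
        = 4 * t * Real.log (c3 * t / 16) + 4 * t * Real.log (16 / c3) := by rw [heqA]; ring
    linarith
  -- key B
  have heqB : Real.log (t ^ 2) = Real.log (c3 * t ^ 2 / (4 * c4)) + Real.log (4 * c4 / c3) := by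
    rw [← Real.log_mul (by positivity) (by positivity)]
    congr 1
    field_simp
  have hB0 : Real.log (c3 * t ^ 2 / (4 * c4)) ≤ c3 * t ^ 2 / (4 * c4) - 1 :=
    Real.log_le_sub_one_of_pos (by positivity)
  have keyB : c4 * Real.log (t ^ 2) ≤ c3 * t ^ 2 / 4 + c4 * Real.log (4 * c4 / c3) := by
    have h := mul_le_mul_of_nonneg_left hB0 hc4p.le
    have e : c4 * (c3 * t ^ 2 / (4 * c4) - 1) = c3 * t ^ 2 / 4 - c4 := by
      field_simp
    have e2 : c4 * Real.log (t ^ 2)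
        = c4 * Real.log (c3 * t ^ 2 / (4 * c4)) + c4 * Real.log (4 * c4 / c3) := by
      rw [heqB]; ring
    linarith
  -- the linear coefficient
  set b := 2 * Real.log c2 + 4 * Real.log (16 / c3) with hb_def
  clear_value b
  have hlog16c3 : Real.log (16 / c3) = Real.log 16 - Real.log c3 :=
    Real.log_div (by norm_num) (ne_of_gt hc3p)
  have hb0 : 0 ≤ b := by rw [hb_def, hlog16c3]; linarith
  have quad : b * t - c3 * t ^ 2 / 2 ≤ b ^ 2 / (2 * c3) := quad_aux c3 b t hc3p
  -- L expansion and bounds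
  have hc2c4 : (0:ℝ) ≤ c2 * c4 := by positivity
  have hLexp : L = Real.log 10 + (Real.log c2 + Real.log c4) / 2 - Real.log c3 := by
    rw [hL_def, Real.log_div (by positivity) (ne_of_gt hc3p),
      Real.log_mul (by norm_num) (by positivity), Real.log_sqrt hc2c4,
      Real.log_mul (by linarith : c2 ≠ 0) (ne_of_gt hc4p)]
  have hlogc4 : Real.log 16 ≤ Real.log c4 := Real.log_le_log (by norm_num) hc4'
  have h1610 : Real.log 16 ≤ 2 * Real.log 10 := by
    rw [show (2:ℝ) * Real.log 10 = Real.log (10 ^ 2) by rw [Real.log_pow]; push_cast; ring]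
    exact Real.log_le_log (by norm_num) (by norm_num)
  have hlog10 : (0:ℝ) < Real.log 10 := Real.log_pos (by norm_num)
  have hbL : b ≤ 4 * L := by rw [hb_def, hLexp, hlog16c3]; linarith
  -- log(4*c4/c3) ≤ 2*L
  have hsq : (10 * Real.sqrt (c2 * c4) / c3) ^ 2 = 100 * (c2 * c4) / c3 ^ 2 := by
    rw [div_pow, mul_pow, Real.sq_sqrt hc2c4]; ring_nf
  have hc4L : Real.log (4 * c4 / c3) ≤ 2 * L := by
    have h2L : 2 * L = Real.log (100 * (c2 * c4) / c3 ^ 2) := by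
      rw [hL_def, ← hsq, Real.log_pow]; push_cast; ring
    rw [h2L]
    apply Real.log_le_log (by positivity)
    rw [div_le_div_iff₀ hc3p (by positivity)]
    exact div_cmp_aux c2 c3 c4 hc3p hc31 hc2 hc4p
  -- 1 ≤ L
  have hs8 : (8:ℝ) ≤ Real.sqrt (c2 * c4) := by
    rw [show (8:ℝ) = Real.sqrt 64 by
      rw [show (64:ℝ) = 8 ^ 2 by norm_num]; exact (Real.sqrt_sq (by norm_num)).symm]
    exact Real.sqrt_le_sqrt (by nlinarith)
  have hL1 : (1:ℝ) ≤ L := by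
    rw [hL_def, show (1:ℝ) = Real.log (Real.exp 1) from (Real.log_exp 1).symm]
    apply Real.log_le_log (Real.exp_pos 1)
    rw [le_div_iff₀ hc3p]
    exact exp_aux _ c3 hs8 hc3p hc31
  -- main chain
  have hlogc2m : Real.log (c2 * t ^ 2) = Real.log c2 + Real.log (t ^ 2) := by
    rw [Real.log_mul (by linarith : c2 ≠ 0) (by positivity)]
  have hlogt2 : Real.log (t ^ 2) = 2 * Real.log t := by
    rw [Real.log_pow]; push_cast; ring
  have hbt : b * t = 2 * t * Real.log c2 + 4 * t * Real.log (16 / c3) := by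
    rw [hb_def]; ring
  have main : -c3 * t ^ 2 + c1 * t * Real.log (c2 * t ^ 2) + c4 * Real.log (t ^ 2) ≤
      b ^ 2 / (2 * c3) + c4 * Real.log (4 * c4 / c3) := by
    rw [hc1, hlogc2m]
    have e1 : 2 * t * (Real.log c2 + Real.log (t ^ 2))
        = 2 * t * Real.log c2 + 4 * t * Real.log t := by rw [hlogt2]; ring
    linarith only [keyA, keyB, quad, hbt, e1]
  -- final comparison
  have hb2 : b ^ 2 ≤ 16 * L ^ 2 := sq_le_aux b L hb0 hbL
  have hdiv1 : b ^ 2 / (2 * c3) ≤ 8 * L ^ 2 / c3 := by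
    rw [div_le_div_iff₀ (by positivity) hc3p]
    nlinarith [mul_le_mul_of_nonneg_right hb2 hc3p.le]
  have hc4term : c4 * Real.log (4 * c4 / c3) ≤ 2 * c4 * L ^ 2 / c3 := by
    have h1 : c4 * Real.log (4 * c4 / c3) ≤ 2 * c4 * L := by
      have := mul_le_mul_of_nonneg_left hc4L hc4p.le
      linarith
    have h2 : 2 * c4 * L ≤ 2 * c4 * L ^ 2 / c3 := by
      rw [le_div_iff₀ hc3p]
      exact lmul_aux c3 c4 L hc3p hc31 hL1 hc4p
    linarith
  have hfin : 8 * L ^ 2 / c3 + 2 * c4 * L ^ 2 / c3 ≤ 132 * c1 * c4 / c3 * L ^ 2 := by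
    calc 8 * L ^ 2 / c3 + 2 * c4 * L ^ 2 / c3 = (8 * L ^ 2 + 2 * c4 * L ^ 2) / c3 := by ring
      _ ≤ (264 * c4 * L ^ 2) / c3 := (div_le_div_iff_of_pos_right hc3p).mpr (fin_aux c4 L hc4')
      _ = 132 * c1 * c4 / c3 * L ^ 2 := by rw [hc1]; ring
  linarith only [main, hdiv1, hc4term, hfin]
end

section
/- Under the assumptions of Lemma for g1: with c1 = 2, c2 ≥ 4, c3 ∈ (0,1), c4 = 8H, H ≥ 2, the derivative g1'(m) = -c3 + (c1·ln(c2·m) + 2·c1)/(2√m) + c4/m is positive at m̃1 = c4/c3 and negative at m̃2 = 100·c4·[ln(c2·c4/c3²)]² / c3². -/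
set_option maxHeartbeats 1000000 in
theorem stmt_3 (c1 c2 c3 c4 H : ℝ) (hc1 : c1 = 2) (hc2 : 4 ≤ c2)
    (hc3 : c3 ∈ Set.Ioo (0 : ℝ) 1) (hc4 : c4 = 8 * H) (hH : 2 ≤ H)
    (g1' : ℝ → ℝ)
    (hg1' : ∀ m, g1' m = -c3 + (c1 * Real.log (c2 * m) + 2 * c1) / (2 * Real.sqrt m) + c4 / m) :
    0 < g1' (c4 / c3) ∧
      g1' (100 * c4 * (Real.log (c2 * c4 / c3 ^ 2)) ^ 2 / c3 ^ 2) < 0 := by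
  obtain ⟨hc3p, hc3l⟩ := hc3
  have hc3ne : c3 ≠ 0 := ne_of_gt hc3p
  have hc4' : (16:ℝ) ≤ c4 := by nlinarith
  have hc4p : (0:ℝ) < c4 := by linarith
  have hc2p : (0:ℝ) < c2 := by linarith
  subst hc1
  constructor
  · rw [hg1']
    have h1 : c4 / (c4 / c3) = c3 := by field_simp
    have hlog : (0:ℝ) ≤ Real.log (c2 * (c4 / c3)) := by
      apply Real.log_nonneg
      rw [mul_div_assoc', le_div_iff₀ hc3p]
      nlinarith
    have hX : 0 < (2 * Real.log (c2 * (c4 / c3)) + 2 * 2) / (2 * Real.sqrt (c4 / c3)) := by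
      apply div_pos (by linarith)
      have : 0 < Real.sqrt (c4 / c3) := Real.sqrt_pos.mpr (div_pos hc4p hc3p)
      linarith
    rw [h1]; linarith
  · set L := Real.log (c2 * c4 / c3 ^ 2) with hLdef
    clear_value L
    have harg : (64:ℝ) ≤ c2 * c4 / c3 ^ 2 := by
      rw [le_div_iff₀ (by positivity)]
      nlinarith [sq_nonneg c3]
    have hexp4 : Real.exp 4 < 64 := by
      have h := Real.exp_one_lt_d9
      have he : (0:ℝ) < Real.exp 1 := Real.exp_pos 1
      have h4 : Real.exp 4 = (Real.exp 1) ^ 4 := by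
        rw [← Real.exp_nat_mul]; norm_num
      have h2 : (Real.exp 1) ^ 2 < 7.39 := by nlinarith
      calc Real.exp 4 = ((Real.exp 1) ^ 2) ^ 2 := by rw [h4]; ring
        _ < 64 := by nlinarith
    have hL4 : (4:ℝ) ≤ L := by
      rw [hLdef, Real.le_log_iff_exp_le (by positivity)]
      linarith
    have hLp : (0:ℝ) < L := by linarith
    have hLne : L ≠ 0 := ne_of_gt hLp
    have hsqc4 : (4:ℝ) ≤ Real.sqrt c4 := by
      have : Real.sqrt 16 ≤ Real.sqrt c4 := Real.sqrt_le_sqrt hc4'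
      rwa [show (16:ℝ) = 4^2 by norm_num, Real.sqrt_sq (by norm_num)] at this
    set m := 100 * c4 * L ^ 2 / c3 ^ 2 with hmdef
    clear_value m
    have hmpos : 0 < m := by
      rw [hmdef]
      exact div_pos (by nlinarith) (by positivity)
    have hsm : Real.sqrt m = 10 * Real.sqrt c4 * L / c3 := by
      have hsq2 : (10 * Real.sqrt c4 * L / c3) ^ 2 = m := by
        rw [hmdef, div_pow, mul_pow, mul_pow, Real.sq_sqrt hc4p.le]; norm_num
      rw [← hsq2, Real.sqrt_sq (by positivity)]
    have hlogm : Real.log (c2 * m) = L + Real.log 100 + 2 * Real.log L := by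
      have hmeq : c2 * m = (c2 * c4 / c3 ^ 2) * (100 * L ^ 2) := by
        rw [hmdef]; field_simp
      rw [hmeq, Real.log_mul (by positivity) (by positivity),
        Real.log_mul (by norm_num) (by positivity), Real.log_pow, ← hLdef]
      push_cast; ring
    have hlog100 : Real.log 100 ≤ 5 := by
      rw [Real.log_le_iff_le_exp (by norm_num)]
      have h := Real.exp_one_gt_d9
      have he : (0:ℝ) < Real.exp 1 := Real.exp_pos 1
      have h5 : Real.exp 5 = (Real.exp 1) ^ 5 := by
        rw [← Real.exp_nat_mul]; norm_num
      have h2 : (7.38:ℝ) < (Real.exp 1) ^ 2 := by nlinarith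
      have h4 : (54.4:ℝ) < (Real.exp 1) ^ 4 := by nlinarith
      rw [h5]
      nlinarith
    have hlog100nn : (0:ℝ) ≤ Real.log 100 := Real.log_nonneg (by norm_num)
    have hlogL : Real.log L ≤ L - 1 := Real.log_le_sub_one_of_pos hLp
    have hlogLnn : (0:ℝ) ≤ Real.log L := Real.log_nonneg (by linarith)
    rw [hg1', hlogm, hsm]
    have hterm2 : c4 / m = c3 ^ 2 / (100 * L ^ 2) := by
      rw [hmdef]; field_simp
    rw [hterm2]
    have hN : 2 * (L + Real.log 100 + 2 * Real.log L) + 2 * 2 ≤ 17 / 2 * L := by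
      nlinarith
    have hNnn : (0:ℝ) ≤ 17 / 2 * L := by linarith
    have hD : 80 * L / c3 ≤ 2 * (10 * Real.sqrt c4 * L / c3) := by
      rw [show 2 * (10 * Real.sqrt c4 * L / c3) = 20 * Real.sqrt c4 * L / c3 by ring,
        div_le_div_iff₀ hc3p hc3p]
      have key : 4 * (L * c3) ≤ Real.sqrt c4 * (L * c3) :=
        mul_le_mul_of_nonneg_right hsqc4 (by positivity)
      nlinarith [key]
    have hDp : (0:ℝ) < 80 * L / c3 := by positivity
    have hT1 : (2 * (L + Real.log 100 + 2 * Real.log L) + 2 * 2) /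
        (2 * (10 * Real.sqrt c4 * L / c3)) ≤ 17 * c3 / 160 := by
      calc (2 * (L + Real.log 100 + 2 * Real.log L) + 2 * 2) /
          (2 * (10 * Real.sqrt c4 * L / c3))
          ≤ (17 / 2 * L) / (80 * L / c3) := div_le_div₀ hNnn hN hDp hD
        _ = 17 * c3 / 160 := by field_simp; ring
    have hT2 : c3 ^ 2 / (100 * L ^ 2) ≤ c3 / 1600 := by
      have h1 : c3 ^ 2 ≤ c3 := by nlinarith
      have h2 : (1600:ℝ) ≤ 100 * L ^ 2 := by nlinarith
      calc c3 ^ 2 / (100 * L ^ 2) ≤ c3 / (100 * L ^ 2) := by gcongr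
        _ ≤ c3 / 1600 := by gcongr
    linarith
end

section
/- Let (r_t)_{t=1}^T be a sequence of real numbers and for each n ≤ T define MV_n = ρ·μ̂_n − σ̂²_n, where μ̂_n = (1/n)·Σ_{t=1}^n r_t and σ̂²_n = (1/n)·Σ_{t=1}^n (r_t − μ̂_n)². If all r_t ∈ [0,1], then for every T ≥ 2, T·MV_T ≥ (T−1)·MV_{T−1} − 2. -/
/-!
Writing `S_n = ∑_{t ≤ n} r_t` and `Q_n = ∑_{t ≤ n} r_t²`, the variance identity gives
`n · MV_n = ρ S_n - Q_n + S_n² / n`. Going from `n = m` to `n = m + 1` adds `ρ r - r² ≥ -1`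
and changes the last term by at least `-S_m² / (m (m + 1)) ≥ -1`, since `0 ≤ S_m ≤ m`.
-/

open Finset

theorem sum_sq_sub_average {ι : Type*} (s : Finset ι) (f : ι → ℝ) :
    ∑ i ∈ s, (f i - (∑ j ∈ s, f j) / #s) ^ 2
      = ∑ i ∈ s, f i ^ 2 - (∑ i ∈ s, f i) ^ 2 / #s := by
  rcases s.eq_empty_or_nonempty with rfl | hs
  · simp
  have hcard : (#s : ℝ) ≠ 0 := by exact_mod_cast hs.card_pos.ne'
  simp only [sub_sq, sum_add_distrib, sum_sub_distrib, ← sum_mul, ← mul_sum, sum_const,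
    nsmul_eq_mul]
  field_simp
  ring

theorem card_mul_meanVariance_eq {ι : Type*} (s : Finset ι) (f : ι → ℝ) (ρ : ℝ) :
    (#s : ℝ) * (ρ * ((∑ i ∈ s, f i) / #s)
        - (∑ i ∈ s, (f i - (∑ j ∈ s, f j) / #s) ^ 2) / #s)
      = ρ * ∑ i ∈ s, f i - ∑ i ∈ s, f i ^ 2 + (∑ i ∈ s, f i) ^ 2 / #s := by
  rcases s.eq_empty_or_nonempty with rfl | hs
  · simp
  have hcard : (#s : ℝ) ≠ 0 := by exact_mod_cast hs.card_pos.ne'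
  rw [sum_sq_sub_average]
  field_simp
  ring

theorem sq_div_le_sq_add_div_succ_add_one {S b : ℝ} {m : ℕ} (hS₀ : 0 ≤ S) (hSm : S ≤ m)
    (hb : 0 ≤ b) : S ^ 2 / m ≤ (S + b) ^ 2 / (m + 1) + 1 := by
  rcases m.eq_zero_or_pos with rfl | hm
  · simp only [CharP.cast_eq_zero, div_zero]; positivity
  have hm' : (0 : ℝ) < m := by exact_mod_cast hm
  calc S ^ 2 / m = S ^ 2 / (m + 1) + S ^ 2 / (m * (m + 1)) := by field_simp
    _ ≤ (S + b) ^ 2 / (m + 1) + 1 := by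
      gcongr
      · linarith
      · rw [div_le_one (by positivity)]; nlinarith

theorem stmt_5 (r : ℕ → ℝ) (ρ : ℝ) (hρ : 0 ≤ ρ)
    (hr : ∀ t, r t ∈ Set.Icc (0 : ℝ) 1)
    (μhat σ2 MV : ℕ → ℝ)
    (hμ : ∀ n, μhat n = (∑ t ∈ Finset.Icc 1 n, r t) / n)
    (hσ : ∀ n, σ2 n = (∑ t ∈ Finset.Icc 1 n, (r t - μhat n) ^ 2) / n)
    (hMV : ∀ n, MV n = ρ * μhat n - σ2 n)
    (T : ℕ) (hT : 2 ≤ T) :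
    (T : ℝ) * MV T ≥ ((T : ℝ) - 1) * MV (T - 1) - 2 := by
  obtain ⟨m, rfl⟩ : ∃ m, T = m + 1 := ⟨T - 1, by omega⟩
  have cumulative (n : ℕ) : (n : ℝ) * MV n = ρ * ∑ t ∈ Icc 1 n, r t
      - ∑ t ∈ Icc 1 n, r t ^ 2 + (∑ t ∈ Icc 1 n, r t) ^ 2 / n := by
    simpa [hMV, hσ, hμ] using card_mul_meanVariance_eq (Icc 1 n) r ρ
  obtain ⟨hb₀, hb₁⟩ := hr (m + 1)
  have hS₀ : 0 ≤ ∑ t ∈ Icc 1 m, r t := sum_nonneg fun t _ ↦ (hr t).1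
  have hSm : ∑ t ∈ Icc 1 m, r t ≤ m := by
    simpa using sum_le_sum fun t (_ : t ∈ Icc 1 m) ↦ (hr t).2
  have hgain := sq_div_le_sq_add_div_succ_add_one hS₀ hSm hb₀
  have hρb : 0 ≤ ρ * r (m + 1) := mul_nonneg hρ hb₀
  have hb2 : r (m + 1) ^ 2 ≤ 1 := by nlinarith
  have hnext := cumulative (m + 1)
  rw [sum_Icc_succ_top (by omega), sum_Icc_succ_top (by omega)] at hnext
  rw [Nat.add_sub_cancel]
  push_cast at hnext ⊢
  linarith [cumulative m]
end

section
/- Consider a sequential process over timesteps t = 1, 2, …, with a default arm of known reward μ0 > 0 and parameter α ∈ (0,1). At each timestep t, the algorithm plays a regular arm (receiving some reward r_t ≥ 0) only if r_S(t−1) + N0(t−1)·μ0 ≥ (1−α)·μ0·t, where r_S(t−1) is the cumulative reward from regular arms and N0(t−1) the number of default-arm pulls up to time t−1; otherwise it plays the default arm, receiving μ0. Then for every t ≥ 1, the total received reward satisfies Σ_{s=1}^t r_{s,x_s} ≥ (1−α)·μ0·t. -/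
/-! The total reward after `t` steps is `r_S(t) + N₀(t) μ₀`, which is exactly the quantity the gate
inspects. So a regular arm is only played when the budget `(1 - α) μ₀ (t + 1)` is already met
before its (nonnegative) reward arrives, while the default arm adds `μ₀ ≥ (1 - α) μ₀`; induction
on `t` finishes the argument. -/

open Finset

theorem sum_eq_sum_filter_add_card_filter_not_mul {ι : Type*} (s : Finset ι) (p : ι → Prop)
    [DecidablePred p] (f : ι → ℝ) (c : ℝ) (hf : ∀ i ∈ s, ¬ p i → f i = c) :
    ∑ i ∈ s, f i = ∑ i ∈ s.filter p, f i + #(s.filter (fun i => ¬ p i)) * c := by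
  rw [← sum_filter_add_sum_filter_not s p f, sum_congr rfl fun i hi => hf i
    (mem_filter.mp hi).1 (mem_filter.mp hi).2, sum_const, nsmul_eq_mul]

theorem mul_le_sum_Icc_of_step {c : ℝ} {r : ℕ → ℝ}
    (hstep : ∀ t : ℕ, (c * (t + 1) ≤ ∑ s ∈ Icc 1 t, r s ∧ 0 ≤ r (t + 1)) ∨ c ≤ r (t + 1)) :
    ∀ t : ℕ, c * t ≤ ∑ s ∈ Icc 1 t, r s
  | 0 => by simp
  | t + 1 => by
    have ih := mul_le_sum_Icc_of_step hstep t
    rw [sum_Icc_succ_top (Nat.le_add_left 1 t)]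
    push_cast
    rcases hstep t with ⟨hahead, hr⟩ | hr <;> linarith

theorem stmt_6_general (μ0 α : ℝ) (hμ0 : 0 < μ0) (hα : α ∈ Set.Ioo (0 : ℝ) 1)
    (reward : ℕ → ℝ) (regular : ℕ → Bool)
    (rS : ℕ → ℝ) (N0 : ℕ → ℕ)
    (hrS : ∀ t, rS t = ∑ s ∈ (Finset.Icc 1 t).filter (fun s => regular s = true), reward s)
    (hN0 : ∀ t, N0 t = ((Finset.Icc 1 t).filter (fun s => regular s = false)).card)
    (hgate : ∀ t, 1 ≤ t → regular t = true →
      rS (t - 1) + (N0 (t - 1) : ℝ) * μ0 ≥ (1 - α) * μ0 * t)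
    (hpos : ∀ t, regular t = true → 0 ≤ reward t)
    (hdef : ∀ t, regular t = false → reward t = μ0)
    (t : ℕ) :
    ∑ s ∈ Finset.Icc 1 t, reward s ≥ (1 - α) * μ0 * t := by
  have htotal : ∀ u, ∑ s ∈ Icc 1 u, reward s = rS u + (N0 u : ℝ) * μ0 := fun u => by
    simpa only [hrS, hN0, Bool.not_eq_true] using
      sum_eq_sum_filter_add_card_filter_not_mul (Icc 1 u) (fun s => regular s = true) reward μ0
        (fun s _ hs => hdef s (by simpa using hs))
  refine mul_le_sum_Icc_of_step (fun u => ?_) t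
  cases hreg : regular (u + 1)
  · right
    rw [hdef _ hreg]
    linarith [mul_pos hα.1 hμ0]
  · left
    have hg := hgate (u + 1) (Nat.le_add_left 1 u) hreg
    rw [Nat.add_sub_cancel, ← htotal] at hg
    exact ⟨by exact_mod_cast hg, hpos _ hreg⟩

theorem stmt_6 (μ0 α : ℝ) (hμ0 : 0 < μ0) (hα : α ∈ Set.Ioo (0 : ℝ) 1)
    (reward : ℕ → ℝ) (regular : ℕ → Bool)
    (rS : ℕ → ℝ) (N0 : ℕ → ℕ)
    (hrS : ∀ t, rS t = ∑ s ∈ (Finset.Icc 1 t).filter (fun s => regular s = true), reward s)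
    (hN0 : ∀ t, N0 t = ((Finset.Icc 1 t).filter (fun s => regular s = false)).card)
    (hgate : ∀ t, 1 ≤ t → regular t = true →
      rS (t - 1) + (N0 (t - 1) : ℝ) * μ0 ≥ (1 - α) * μ0 * t)
    (hpos : ∀ t, regular t = true → 0 ≤ reward t)
    (hdef : ∀ t, regular t = false → reward t = μ0)
    (t : ℕ) (ht : 1 ≤ t) :
    ∑ s ∈ Finset.Icc 1 t, reward s ≥ (1 - α) * μ0 * t :=
  stmt_6_general μ0 α hμ0 hα reward regular rS N0 hrS hN0 hgate hpos hdef t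
end

section
/- Consider the MV-CUCB gating rule: at time t, a regular arm is played only if (t−1)·MV_{t−1} − 2 ≥ (1−α)·MV0·t, where MV_{t−1} is the empirical mean-variance of the algorithm's reward sequence up to time t−1; otherwise the default arm (constant reward μ0, MV0 = ρ·μ0) is played. Assume all rewards lie in [0,1], ρ ≥ 0, and α·MV0 > 2. Then for every t ≥ 1, MV_t ≥ (1−α)·MV0. -/
/-!
Write `t · MV_t = ρ · (sum of the rewards) − (sum of squared deviations)`. By Welford's identity
one more reward in `[0, 1]` raises the sum of squared deviations by at most `1`, so
`t · MV_t ≥ (t − 1) · MV_{t−1} + ρ · r_t − 1`. Then `t · MV_t ≥ (1 − α) · MV0 · t` follows by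
induction: at a regular pull the gate's slack `2` absorbs this loss, and a default pull adds at
least `MV0 − 1 ≥ (1 − α) · MV0`, because `α · MV0 ≥ 1`.
-/

open Finset

noncomputable section

namespace Empirical

def mean (x : ℕ → ℝ) (t : ℕ) : ℝ := (∑ s ∈ Icc 1 t, x s) / t

def variance (x : ℕ → ℝ) (t : ℕ) : ℝ := (∑ s ∈ Icc 1 t, (x s - mean x t) ^ 2) / t

def meanVariance (ρ : ℝ) (x : ℕ → ℝ) (t : ℕ) : ℝ := ρ * mean x t - variance x t

variable (x : ℕ → ℝ)

theorem sum_Icc_one_succ (n : ℕ) : ∑ s ∈ Icc 1 (n + 1), x s = ∑ s ∈ Icc 1 n, x s + x (n + 1) :=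
  sum_Icc_succ_top (by omega) x

theorem mul_variance (t : ℕ) :
    t * variance x t = ∑ s ∈ Icc 1 t, x s ^ 2 - (∑ s ∈ Icc 1 t, x s) ^ 2 / t := by
  rcases t.eq_zero_or_pos with rfl | ht
  · simp
  have ht' : (t : ℝ) ≠ 0 := by positivity
  have hexpand : ∑ s ∈ Icc 1 t, (x s - mean x t) ^ 2
      = ∑ s ∈ Icc 1 t, x s ^ 2 - 2 * mean x t * ∑ s ∈ Icc 1 t, x s + t * mean x t ^ 2 := by
    simp only [sub_sq, sum_add_distrib, sum_sub_distrib, ← sum_mul, ← mul_sum, sum_const,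
      Nat.card_Icc, add_tsub_cancel_right, nsmul_eq_mul]
    ring
  rw [variance, hexpand, mean]
  field_simp
  ring

theorem succ_mul_mean (n : ℕ) : (n + 1) * mean x (n + 1) = n * mean x n + x (n + 1) := by
  rcases n.eq_zero_or_pos with rfl | hn
  · simp [mean]
  simp only [mean, sum_Icc_one_succ]
  push_cast
  field_simp

theorem succ_mul_variance (n : ℕ) :
    (n + 1) * variance x (n + 1)
      = n * variance x n + n / (n + 1) * (x (n + 1) - mean x n) ^ 2 := by
  have h := mul_variance x (n + 1)
  push_cast at h
  rw [h, mul_variance, sum_Icc_one_succ, sum_Icc_one_succ, mean]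
  rcases n.eq_zero_or_pos with rfl | hn
  · simp
  field_simp
  ring

variable {x}

theorem mean_mem_Icc (hx : ∀ s, x s ∈ Set.Icc (0 : ℝ) 1) (t : ℕ) : mean x t ∈ Set.Icc (0 : ℝ) 1 := by
  have hsum : ∑ s ∈ Icc 1 t, x s ≤ t := by
    exact (sum_le_sum fun s _ => (hx s).2).trans_eq (by simp)
  exact ⟨div_nonneg (sum_nonneg fun s _ => (hx s).1) t.cast_nonneg, div_le_one_of_le₀ hsum t.cast_nonneg⟩

theorem succ_mul_variance_le (hx : ∀ s, x s ∈ Set.Icc (0 : ℝ) 1) (n : ℕ) :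
    (n + 1) * variance x (n + 1) ≤ n * variance x n + 1 := by
  obtain ⟨hm0, hm1⟩ := mean_mem_Icc hx n
  obtain ⟨hx0, hx1⟩ := hx (n + 1)
  have hsq : (x (n + 1) - mean x n) ^ 2 ≤ 1 := by nlinarith
  have hfrac : (n : ℝ) / (n + 1) ≤ 1 := div_le_one_of_le₀ (by linarith) (by positivity)
  have hincr : (n : ℝ) / (n + 1) * (x (n + 1) - mean x n) ^ 2 ≤ 1 :=
    mul_le_one₀ hfrac (sq_nonneg _) hsq
  rw [succ_mul_variance]
  linarith

theorem mul_meanVariance_succ_ge (ρ : ℝ) (hx : ∀ s, x s ∈ Set.Icc (0 : ℝ) 1) (n : ℕ) :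
    n * meanVariance ρ x n + ρ * x (n + 1) - 1 ≤ (n + 1) * meanVariance ρ x (n + 1) := by
  have hmean := succ_mul_mean x n
  have hvar := succ_mul_variance_le hx n
  simp only [meanVariance]
  linear_combination (-ρ) * hmean + hvar

end Empirical

end

open Empirical in
theorem stmt_17_general (α μ0 ρ MV0 : ℝ)
    (hρ : 0 ≤ ρ) (hMV0 : MV0 = ρ * μ0)
    (hbudget : 2 < α * MV0)
    (reward : ℕ → ℝ) (hr : ∀ t, reward t ∈ Set.Icc (0 : ℝ) 1)
    (regular : ℕ → Bool)
    (μhat MV : ℕ → ℝ)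
    (hμhat : ∀ t, μhat t = (∑ s ∈ Finset.Icc 1 t, reward s) / t)
    (hMV : ∀ t, MV t = ρ * μhat t - (∑ s ∈ Finset.Icc 1 t, (reward s - μhat t) ^ 2) / t)
    (hgate : ∀ t, 1 ≤ t → regular t = true →
      ((t : ℝ) - 1) * MV (t - 1) - 2 ≥ (1 - α) * MV0 * t)
    (hdef : ∀ t, regular t = false → reward t = μ0) :
    ∀ t, 1 ≤ t → MV t ≥ (1 - α) * MV0 := by
  have hMV' : ∀ t, MV t = meanVariance ρ reward t := fun t => by
    rw [hMV, hμhat]; rfl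
  have key : ∀ t : ℕ, (1 - α) * MV0 * t ≤ t * MV t := by
    intro t
    induction t with
    | zero => simp
    | succ n ih =>
      have hstep := mul_meanVariance_succ_ge ρ hr n
      rw [← hMV', ← hMV'] at hstep
      push_cast
      cases hreg : regular (n + 1) with
      | true =>
        have hg := hgate (n + 1) (by omega) hreg
        simp only [Nat.add_sub_cancel, Nat.cast_add, Nat.cast_one, add_sub_cancel_right] at hg
        linarith [mul_nonneg hρ (hr (n + 1)).1]
      | false =>
        rw [hdef (n + 1) hreg, ← hMV0] at hstep
        linarith
  intro t ht
  have htpos : (0 : ℝ) < t := by exact_mod_cast ht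
  exact le_of_mul_le_mul_left (by linarith [key t]) htpos

theorem stmt_17 (α μ0 ρ MV0 : ℝ) (hα : α ∈ Set.Ioo (0 : ℝ) 1)
    (hμ0 : μ0 ∈ Set.Ioc (0 : ℝ) 1) (hρ : 0 ≤ ρ) (hMV0 : MV0 = ρ * μ0)
    (hbudget : 2 < α * MV0)
    (reward : ℕ → ℝ) (hr : ∀ t, reward t ∈ Set.Icc (0 : ℝ) 1)
    (regular : ℕ → Bool)
    (μhat MV : ℕ → ℝ)
    (hμhat : ∀ t, μhat t = (∑ s ∈ Finset.Icc 1 t, reward s) / t)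
    (hMV : ∀ t, MV t = ρ * μhat t - (∑ s ∈ Finset.Icc 1 t, (reward s - μhat t) ^ 2) / t)
    (hgate : ∀ t, 1 ≤ t → regular t = true →
      ((t : ℝ) - 1) * MV (t - 1) - 2 ≥ (1 - α) * MV0 * t)
    (hdef : ∀ t, regular t = false → reward t = μ0) :
    ∀ t, 1 ≤ t → MV t ≥ (1 - α) * MV0 :=
  stmt_17_general α μ0 ρ MV0 hρ hMV0 hbudget reward hr regular μhat MV hμhat hMV hgate hdef
end

section
/- For positive constants c1, c2, c3, c4 with c3 > 2, c4 > 3·c1, and c2·c4²/c3² ≥ e: c1·ln(9·c2·c4²·[ln(c2·c4²/c3²)]²/c3²) + 2·c1 < 3·c4·ln(c2·c4²/c3²). -/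
/-! With `x = c2 c4² / c3²` and `L = log x ≥ 1`, the left-hand side is
`c1 (L + 2 log (3L) + 2)`, and `log y ≤ y - 1` bounds this by `7 c1 L < 3 c4 L`. -/

open Real

lemma log_nine_mul_sq_le {L : ℝ} (hL : 0 < L) : log (9 * L ^ 2) ≤ 6 * L - 2 := by
  have h : log (3 * L) ≤ 3 * L - 1 := log_le_sub_one_of_pos (by positivity)
  calc log (9 * L ^ 2) = 2 * log (3 * L) := by
        rw [show 9 * L ^ 2 = (3 * L) ^ 2 by ring, log_pow]; norm_num
    _ ≤ 6 * L - 2 := by linarith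

lemma log_mul_nine_mul_log_sq_add_two_le {x : ℝ} (hx : 1 < x) :
    log (x * (9 * log x ^ 2)) + 2 ≤ 7 * log x := by
  have hL : 0 < log x := log_pos hx
  rw [log_mul (by positivity) (by positivity)]
  linarith [log_nine_mul_sq_le hL]

theorem stmt_18_general (c1 c2 c3 c4 : ℝ) (h1 : 0 < c1)
    (h4 : 3 * c1 < c4)
    (he : Real.exp 1 ≤ c2 * c4 ^ 2 / c3 ^ 2) :
    c1 * Real.log (9 * c2 * c4 ^ 2 * (Real.log (c2 * c4 ^ 2 / c3 ^ 2)) ^ 2 / c3 ^ 2) + 2 * c1 <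
      3 * c4 * Real.log (c2 * c4 ^ 2 / c3 ^ 2) := by
  set x := c2 * c4 ^ 2 / c3 ^ 2
  have hx : 1 < x := (one_lt_exp_iff.mpr one_pos).trans_le he
  have hL : 0 < log x := log_pos hx
  have hbound := log_mul_nine_mul_log_sq_add_two_le hx
  calc c1 * log (9 * c2 * c4 ^ 2 * log x ^ 2 / c3 ^ 2) + 2 * c1
      = c1 * (log (x * (9 * log x ^ 2)) + 2) := by
        rw [mul_add, mul_comm 2 c1]; congr 3; ring
    _ ≤ c1 * (7 * log x) := mul_le_mul_of_nonneg_left hbound h1.le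
    _ < 3 * c4 * log x := by nlinarith

theorem stmt_18 (c1 c2 c3 c4 : ℝ) (h1 : 0 < c1) (h2 : 0 < c2)
    (h3 : 2 < c3) (h4 : 3 * c1 < c4)
    (he : Real.exp 1 ≤ c2 * c4 ^ 2 / c3 ^ 2) :
    c1 * Real.log (9 * c2 * c4 ^ 2 * (Real.log (c2 * c4 ^ 2 / c3 ^ 2)) ^ 2 / c3 ^ 2) + 2 * c1 <
      3 * c4 * Real.log (c2 * c4 ^ 2 / c3 ^ 2) :=
  stmt_18_general c1 c2 c3 c4 h1 h4 he
end
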